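/- A minimum-vertex counterexample to the inequality fvs ≤ 2·cp among subcubic planar multigraphs must be 3-regular. -/

import Mathlib

/- A multigraph on vertex type `V` is represented by its multiset of edges,
   each edge being an unordered pair (`Sym2 V`); loops are `s(v, v)` and
   parallel edges are repeated elements of the multiset. -/

open Classical

namespace MG

variable {V : Type*}

/-- Degree of a vertex (a loop counts twice). -/
noncomputable def deg (G : Multiset (Sym2 V)) (v : V) : ℕ :=
  (G.map fun e => if e = s(v, v) then 2 else if v ∈ e then 1 else 0).sum

/-- The vertices touched by some edge. -/
def support (G : Multiset (Sym2 V)) : Set V := {v | ∃ e ∈ G, v ∈ e}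

/-- Adjacency. -/
def Adj (G : Multiset (Sym2 V)) (a b : V) : Prop := s(a, b) ∈ G

/-- Reachability. -/
def Reach (G : Multiset (Sym2 V)) : V → V → Prop := Relation.ReflTransGen (Adj G)

/-- Connectedness (of the non-isolated vertices). -/
def Conn (G : Multiset (Sym2 V)) : Prop :=
  (support G).Nonempty ∧ ∀ a ∈ support G, ∀ b ∈ support G, Reach G a b

/-- A multigraph is a cycle iff it is nonempty, connected and 2-regular. -/
def IsCycle (C : Multiset (Sym2 V)) : Prop :=
  C ≠ 0 ∧ Conn C ∧ ∀ v ∈ support C, deg C v = 2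

/-- A forest contains no cycle. -/
def IsForest (G : Multiset (Sym2 V)) : Prop := ∀ C ≤ G, ¬ IsCycle C

/-- Delete a set of vertices (removing all incident edges). -/
noncomputable def deleteVerts (G : Multiset (Sym2 V)) (S : Set V) : Multiset (Sym2 V) :=
  G.filter fun e => ∀ v ∈ e, v ∉ S

/-- Minimum size of a feedback vertex set. -/
noncomputable def fvs (G : Multiset (Sym2 V)) : ℕ :=
  sInf {n | ∃ S : Finset V, S.card = n ∧ IsForest (deleteVerts G ↑S)}

/-- `f` is a packing of `n` pairwise vertex-disjoint cycles in `G`. -/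
def IsCyclePackingOn (G : Multiset (Sym2 V)) {n : ℕ} (f : Fin n → Multiset (Sym2 V)) : Prop :=
  (∀ i, f i ≤ G ∧ IsCycle (f i)) ∧
    ∀ i j, i ≠ j → Disjoint (support (f i)) (support (f j))

/-- Maximum size of a cycle packing. -/
noncomputable def cp (G : Multiset (Sym2 V)) : ℕ :=
  sSup {n | ∃ f : Fin n → Multiset (Sym2 V), IsCyclePackingOn G f}

/-- `H` is a minor of the multigraph `G` (branch-set definition). -/
def HasMinor {W : Type*} (G : Multiset (Sym2 V)) (H : SimpleGraph W) : Prop :=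
  ∃ B : W → Set V, (∀ w, (B w).Nonempty) ∧
    (∀ w w', w ≠ w' → Disjoint (B w) (B w')) ∧
    (∀ w, ∀ a ∈ B w, ∀ b ∈ B w,
      Relation.ReflTransGen (fun x y => Adj G x y ∧ x ∈ B w ∧ y ∈ B w) a b) ∧
    (∀ w w', H.Adj w w' → ∃ a ∈ B w, ∃ b ∈ B w', Adj G a b)

/-- Planarity, via Wagner's characterization: no `K₅` minor and no `K₃,₃` minor. -/
def Planar (G : Multiset (Sym2 V)) : Prop :=
  ¬ HasMinor G (SimpleGraph.completeGraph (Fin 5)) ∧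
    ¬ HasMinor G (completeBipartiteGraph (Fin 3) (Fin 3))

/-- All degrees are at most 3. -/
def Subcubic (G : Multiset (Sym2 V)) : Prop := ∀ v, deg G v ≤ 3

/-- `H` is a connected component of `M`. -/
def IsComponent (M H : Multiset (Sym2 V)) : Prop :=
  H ≤ M ∧ Conn H ∧ ∀ e ∈ M - H, ∀ v ∈ e, v ∉ support H

end MG

/-! A vertex carrying a loop, or of degree one, can be deleted, and a vertex `v` of degree two
with edges `va`, `vb` can be suppressed, i.e. replaced by the single edge `ab`. Each operation keeps
the graph subcubic and planar and shrinks its support, so by minimality the smaller graph `H`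
satisfies `fvs H ≤ 2 * cp H`. Deleting a looped vertex lowers `fvs` by at most one and `cp` by
at least one (the loop is a cycle). Deleting a vertex of degree one does not touch any cycle, and
suppressing a vertex of degree two maps cycles through `v` to cycles through `ab` and back, so in
these cases `fvs G ≤ fvs H` and `cp H ≤ cp G`. Either way `fvs G ≤ 2 * cp G`, a contradiction.
-/

namespace MG

variable {V : Type*}

section Basics

lemma deg_cons (e : Sym2 V) (A : Multiset (Sym2 V)) (v : V) :
    deg (e ::ₘ A) v = (if e = s(v, v) then 2 else if v ∈ e then 1 else 0) + deg A v := by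
  simp [deg]

lemma deg_mono {A B : Multiset (Sym2 V)} (h : A ≤ B) (v : V) : deg A v ≤ deg B v := by
  obtain ⟨C, rfl⟩ := Multiset.le_iff_exists_add.mp h
  simp [deg]

lemma deg_eq_zero_iff {A : Multiset (Sym2 V)} {v : V} : deg A v = 0 ↔ ∀ e ∈ A, v ∉ e := by
  induction A using Multiset.induction with
  | empty => simp [deg]
  | cons e A ih =>
    rw [deg_cons, Nat.add_eq_zero_iff, ih, Multiset.forall_mem_cons]
    by_cases hv : v ∈ e
    · simp only [hv, not_true_eq_false, false_and, iff_false, if_true]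
      split_ifs <;> simp
    · have hloop : e ≠ s(v, v) := by rintro rfl; simp at hv
      simp [hv, hloop]

lemma deg_eq_card_filter {A : Multiset (Sym2 V)} {v : V} (hloop : s(v, v) ∉ A) :
    deg A v = Multiset.card (A.filter (v ∈ ·)) := by
  induction A using Multiset.induction with
  | empty => simp [deg]
  | cons e A ih =>
    rw [Multiset.mem_cons, not_or] at hloop
    rw [deg_cons, ih hloop.2, Multiset.filter_cons, if_neg (Ne.symm hloop.1)]
    by_cases hv : v ∈ e <;> simp [hv, add_comm]

lemma support_zero : support (0 : Multiset (Sym2 V)) = ∅ := by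
  simp [support]

lemma support_cons (e : Sym2 V) (A : Multiset (Sym2 V)) :
    support (e ::ₘ A) = {x | x ∈ e} ∪ support A := by
  ext x
  simp [support]

lemma support_mono {A B : Multiset (Sym2 V)} (h : A ≤ B) : support A ⊆ support B :=
  fun _ ⟨e, he, hx⟩ => ⟨e, Multiset.mem_of_le h he, hx⟩

lemma support_finite (A : Multiset (Sym2 V)) : (support A).Finite := by
  induction A using Multiset.induction with
  | empty => simp [support_zero]
  | cons e A ih =>
    rw [support_cons]
    refine Set.Finite.union ?_ ih
    induction e using Sym2.inductionOn with
    | hf a b => simp [Sym2.mem_iff, Set.ofPred_or]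

lemma notMem_support_iff {A : Multiset (Sym2 V)} {v : V} :
    v ∉ support A ↔ ∀ e ∈ A, v ∉ e := by
  simp [support]

lemma deg_pos_of_mem_support {A : Multiset (Sym2 V)} {v : V} (hv : v ∈ support A) :
    0 < deg A v :=
  Nat.pos_of_ne_zero fun h => notMem_support_iff.mpr (deg_eq_zero_iff.mp h) hv

lemma adj_symm {A : Multiset (Sym2 V)} {x y : V} (h : Adj A x y) : Adj A y x := by
  rwa [Adj, Sym2.eq_swap]

lemma reach_symm {A : Multiset (Sym2 V)} {x y : V} (h : Reach A x y) : Reach A y x := by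
  induction h with
  | refl => exact .refl
  | tail _ hyz ih => exact .head (adj_symm hyz) ih

end Basics

section Deletion

lemma deleteVerts_le (G : Multiset (Sym2 V)) (S : Set V) : deleteVerts G S ≤ G :=
  Multiset.filter_le _ _

lemma le_deleteVerts_iff {C G : Multiset (Sym2 V)} {S : Set V} :
    C ≤ deleteVerts G S ↔ C ≤ G ∧ Disjoint (support C) S := by
  simp only [deleteVerts, Multiset.le_filter, Set.disjoint_left, support]
  aesop

lemma deleteVerts_deleteVerts (G : Multiset (Sym2 V)) (S T : Set V) :
    deleteVerts (deleteVerts G S) T = deleteVerts G (S ∪ T) := by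
  simp only [deleteVerts, Multiset.filter_filter, Set.mem_union, not_or]
  congr 1
  ext e
  simp only [forall_and]
  tauto

lemma deleteVerts_support (G : Multiset (Sym2 V)) : deleteVerts G (support G) = 0 :=
  Multiset.filter_eq_nil.mpr fun e he h => by
    induction e using Sym2.inductionOn with
    | hf x y => exact h x (Sym2.mem_mk_left x y) ⟨_, he, Sym2.mem_mk_left x y⟩

lemma support_deleteVerts_ssubset {G : Multiset (Sym2 V)} {S : Set V} {v : V}
    (hvG : v ∈ support G) (hvS : v ∈ S) : support (deleteVerts G S) ⊂ support G :=
  (Set.ssubset_iff_of_subset (support_mono (deleteVerts_le G S))).mpr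
    ⟨v, hvG, fun hv => Set.disjoint_left.mp (le_deleteVerts_iff.mp le_rfl).2 hv hvS⟩

lemma Subcubic.mono {A B : Multiset (Sym2 V)} (h : A ≤ B) (hB : Subcubic B) : Subcubic A :=
  fun v => (deg_mono h v).trans (hB v)

lemma HasMinor.mono {W : Type*} {A B : Multiset (Sym2 V)} {K : SimpleGraph W} (h : A ≤ B)
    (hA : HasMinor A K) : HasMinor B K := by
  obtain ⟨Br, hne, hdisj, hconn, hadj⟩ := hA
  refine ⟨Br, hne, hdisj, fun w a ha b hb => ?_, fun w w' hww => ?_⟩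
  · refine Relation.ReflTransGen.mono ?_ _ _ (hconn w a ha b hb)
    exact fun x y hxy => ⟨Multiset.mem_of_le h hxy.1, hxy.2⟩
  · obtain ⟨a, ha, b, hb, hab⟩ := hadj w w' hww
    exact ⟨a, ha, b, hb, Multiset.mem_of_le h hab⟩

lemma Planar.mono {A B : Multiset (Sym2 V)} (h : A ≤ B) (hB : Planar B) : Planar A :=
  ⟨fun hm => hB.1 (hm.mono h), fun hm => hB.2 (hm.mono h)⟩

end Deletion

section FeedbackVertexSets

lemma isForest_zero : IsForest (0 : Multiset (Sym2 V)) :=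
  fun _ hC hcyc => hcyc.1 (Multiset.le_zero.mp hC)

lemma fvs_spec (G : Multiset (Sym2 V)) :
    ∃ S : Finset V, S.card = fvs G ∧ IsForest (deleteVerts G ↑S) := by
  refine Nat.sInf_mem (s := {n | ∃ S : Finset V, S.card = n ∧ IsForest (deleteVerts G ↑S)})
    ⟨_, (support_finite G).toFinset, rfl, ?_⟩
  rw [Set.Finite.coe_toFinset, deleteVerts_support]
  exact isForest_zero

lemma fvs_le {G : Multiset (Sym2 V)} {S : Finset V} (h : IsForest (deleteVerts G ↑S)) :
    fvs G ≤ S.card :=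
  Nat.sInf_le ⟨S, rfl, h⟩

lemma fvs_le_fvs_deleteVerts_add_card (G : Multiset (Sym2 V)) (T : Finset V) :
    fvs G ≤ fvs (deleteVerts G ↑T) + T.card := by
  obtain ⟨S, hS, hforest⟩ := fvs_spec (deleteVerts G ↑T)
  calc fvs G ≤ (T ∪ S).card := by
        apply fvs_le
        rwa [Finset.coe_union, ← deleteVerts_deleteVerts]
    _ ≤ T.card + S.card := Finset.card_union_le T S
    _ = fvs (deleteVerts G ↑T) + T.card := by rw [hS, add_comm]

lemma fvs_le_fvs_of_reroute {G H : Multiset (Sym2 V)}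
    (h : ∀ S : Set V, ∀ C ≤ deleteVerts G S, IsCycle C →
      ∃ C' ≤ deleteVerts H S, IsCycle C') :
    fvs G ≤ fvs H := by
  obtain ⟨S, hS, hforest⟩ := fvs_spec H
  rw [← hS]
  refine fvs_le fun C hC hcyc => ?_
  obtain ⟨C', hC', hcyc'⟩ := h S C hC hcyc
  exact hforest C' hC' hcyc'

lemma fvs_le_fvs_deleteVerts_of_deg_le_one {G : Multiset (Sym2 V)} {v : V} (h : deg G v ≤ 1) :
    fvs G ≤ fvs (deleteVerts G {v}) := by
  refine fvs_le_fvs_of_reroute fun S C hC hcyc => ⟨C, ?_, hcyc⟩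
  obtain ⟨hCG, hCS⟩ := le_deleteVerts_iff.mp hC
  have hvC : v ∉ support C := fun hv => by
    have := deg_mono hCG v
    have := hcyc.2.2 v hv
    omega
  exact le_deleteVerts_iff.mpr
    ⟨le_deleteVerts_iff.mpr ⟨hCG, Set.disjoint_singleton_right.mpr hvC⟩, hCS⟩

end FeedbackVertexSets

section CyclePackings

lemma cp_set_bddAbove (G : Multiset (Sym2 V)) :
    BddAbove {n | ∃ f : Fin n → Multiset (Sym2 V), IsCyclePackingOn G f} := by
  refine ⟨(support_finite G).toFinset.card, ?_⟩
  rintro n ⟨f, hf, hdisj⟩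
  choose g hg using fun i => (hf i).2.2.1.1
  have hginj : Function.Injective g := fun i j hij => by
    by_contra hne
    exact Set.disjoint_left.mp (hdisj i j hne) (hg i) (hij ▸ hg j)
  simpa using Finset.card_le_card_of_injOn (s := Finset.univ) g
    (fun i _ => (support_finite G).mem_toFinset.mpr (support_mono (hf i).1 (hg i)))
    hginj.injOn

lemma le_cp {G : Multiset (Sym2 V)} {n : ℕ} {f : Fin n → Multiset (Sym2 V)}
    (h : IsCyclePackingOn G f) : n ≤ cp G :=
  le_csSup (cp_set_bddAbove G) ⟨f, h⟩

lemma cp_spec (G : Multiset (Sym2 V)) :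
    ∃ f : Fin (cp G) → Multiset (Sym2 V), IsCyclePackingOn G f :=
  Nat.sSup_mem (s := {n | ∃ f : Fin n → Multiset (Sym2 V), IsCyclePackingOn G f})
    ⟨0, fun _ => 0, fun i => i.elim0, fun i => i.elim0⟩ (cp_set_bddAbove G)

lemma cp_le_cp_of_map {G H : Multiset (Sym2 V)} (φ : Multiset (Sym2 V) → Multiset (Sym2 V))
    (hcycle : ∀ C ≤ H, IsCycle C → φ C ≤ G ∧ IsCycle (φ C))
    (hdisj : ∀ C ≤ H, ∀ D ≤ H, IsCycle C → IsCycle D →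
      Disjoint (support C) (support D) → Disjoint (support (φ C)) (support (φ D))) :
    cp H ≤ cp G := by
  obtain ⟨f, hf, hfd⟩ := cp_spec H
  exact le_cp (f := φ ∘ f) ⟨fun i => hcycle _ (hf i).1 (hf i).2,
    fun i j hij => hdisj _ (hf i).1 _ (hf j).1 (hf i).2 (hf j).2 (hfd i j hij)⟩

lemma cp_mono {G H : Multiset (Sym2 V)} (h : H ≤ G) : cp H ≤ cp G :=
  cp_le_cp_of_map id (fun _ hC hcyc => ⟨hC.trans h, hcyc⟩) fun _ _ _ _ _ _ hd => hd

lemma isCycle_loop (u : V) : IsCycle {s(u, u)} := by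
  have hs : support ({s(u, u)} : Multiset (Sym2 V)) = {u} := by
    ext x
    simp [support]
  refine ⟨Multiset.singleton_ne_zero _, ⟨by simp [hs], ?_⟩, ?_⟩
  · rintro x hx y hy
    rw [hs, Set.mem_singleton_iff] at hx hy
    rw [hx, hy]
    exact .refl
  · rintro x hx
    rw [hs, Set.mem_singleton_iff] at hx
    simp [hx, deg]

lemma cp_deleteVerts_add_one_le {G D : Multiset (Sym2 V)} {S : Set V}
    (hD : D ≤ G) (hDc : IsCycle D) (hDS : support D ⊆ S) :
    cp (deleteVerts G S) + 1 ≤ cp G := by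
  obtain ⟨f, hf, hfd⟩ := cp_spec (deleteVerts G S)
  have hfS : ∀ i, Disjoint (support (f i)) (support D) := fun i =>
    (le_deleteVerts_iff.mp (hf i).1).2.mono_right hDS
  refine le_cp (f := Fin.snoc f D) ⟨fun i => ?_, fun i j hij => ?_⟩
  · cases i using Fin.lastCases with
    | last => simpa using ⟨hD, hDc⟩
    | cast i => simpa using ⟨(hf i).1.trans (deleteVerts_le G S), (hf i).2⟩
  · cases i using Fin.lastCases <;> cases j using Fin.lastCases
    · exact absurd rfl hij
    · simpa using (hfS _).symm
    · simpa using hfS _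
    · simpa using hfd _ _ fun h => hij (by rw [h])

end CyclePackings

section Suppression

variable {v a b : V} {A : Multiset (Sym2 V)}

lemma support_cons_cons :
    support (s(v, a) ::ₘ s(v, b) ::ₘ A) = insert v (support (s(a, b) ::ₘ A)) := by
  simp only [support_cons]
  ext x
  simp only [Set.mem_union, Set.mem_ofPred_eq, Sym2.mem_iff, Set.mem_insert_iff]
  tauto

lemma notMem_support_cons (hav : a ≠ v) (hbv : b ≠ v) (hA : ∀ e ∈ A, v ∉ e) :
    v ∉ support (s(a, b) ::ₘ A) :=
  notMem_support_iff.mpr <| Multiset.forall_mem_cons.mpr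
    ⟨by simp [Sym2.mem_iff, hav.symm, hbv.symm], hA⟩

lemma support_cons_ssubset_support_cons_cons (hav : a ≠ v) (hbv : b ≠ v)
    (hA : ∀ e ∈ A, v ∉ e) :
    support (s(a, b) ::ₘ A) ⊂ support (s(v, a) ::ₘ s(v, b) ::ₘ A) := by
  rw [support_cons_cons]
  exact Set.ssubset_insert (notMem_support_cons hav hbv hA)

lemma deg_cons_cons_of_ne {u : V} (hav : a ≠ v) (hbv : b ≠ v) (hu : u ≠ v) :
    deg (s(v, a) ::ₘ s(v, b) ::ₘ A) u = deg (s(a, b) ::ₘ A) u := by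
  simp only [deg_cons]
  split_ifs <;> simp_all [Sym2.mem_iff]
  omega

lemma deg_cons_cons_self (hav : a ≠ v) (hbv : b ≠ v) (hA : ∀ e ∈ A, v ∉ e) :
    deg (s(v, a) ::ₘ s(v, b) ::ₘ A) v = 2 := by
  simp [deg_cons, deg_eq_zero_iff.mpr hA, hav, hbv]

lemma deg_cons_le_deg_cons_cons (hav : a ≠ v) (hbv : b ≠ v) (u : V) :
    deg (s(a, b) ::ₘ A) u ≤ deg (s(v, a) ::ₘ s(v, b) ::ₘ A) u := by
  rcases eq_or_ne u v with rfl | hu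
  · simp [deg_cons, Sym2.mem_iff, hav, hbv, hav.symm, hbv.symm]
    omega
  · exact (deg_cons_cons_of_ne hav hbv hu).ge

lemma Subcubic.suppress (hav : a ≠ v) (hbv : b ≠ v)
    (h : Subcubic (s(v, a) ::ₘ s(v, b) ::ₘ A)) : Subcubic (s(a, b) ::ₘ A) :=
  fun u => (deg_cons_le_deg_cons_cons hav hbv u).trans (h u)

lemma reach_cons_cons_of_reach_cons {x y : V} (h : Reach (s(a, b) ::ₘ A) x y) :
    Reach (s(v, a) ::ₘ s(v, b) ::ₘ A) x y := by
  have hva : Adj (s(v, a) ::ₘ s(v, b) ::ₘ A) v a := by simp [Adj]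
  have hvb : Adj (s(v, a) ::ₘ s(v, b) ::ₘ A) v b := by simp [Adj]
  induction h with
  | refl => exact .refl
  | tail _ hpq ih =>
    refine ih.trans ?_
    rcases Multiset.mem_cons.mp hpq with heq | hmem
    · rcases Sym2.eq_iff.mp heq with ⟨rfl, rfl⟩ | ⟨rfl, rfl⟩
      · exact .head (adj_symm hva) (.single hvb)
      · exact .head (adj_symm hvb) (.single hva)
    · exact .single (Multiset.mem_cons_of_mem (Multiset.mem_cons_of_mem hmem))

lemma reach_cons_of_reach_cons_cons {x y : V} (hav : a ≠ v) (hbv : b ≠ v)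
    (hA : ∀ e ∈ A, v ∉ e)
    (h : Reach (s(v, a) ::ₘ s(v, b) ::ₘ A) x y) :
    Reach (s(a, b) ::ₘ A) (if x = v then a else x) (if y = v then a else y) := by
  induction h with
  | refl => exact .refl
  | @tail p q _ hpq ih =>
    refine ih.trans ?_
    rcases Multiset.mem_cons.mp hpq with heq | hpq
    · rcases Sym2.eq_iff.mp heq with ⟨hp, hq⟩ | ⟨hp, hq⟩ <;>
        simpa [hp, hq, hav] using Relation.ReflTransGen.refl
    have hab : Adj (s(a, b) ::ₘ A) a b := Multiset.mem_cons_self _ _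
    rcases Multiset.mem_cons.mp hpq with heq | hmem
    · rcases Sym2.eq_iff.mp heq with ⟨hp, hq⟩ | ⟨hp, hq⟩
      · simpa [hp, hq, hbv] using Relation.ReflTransGen.single hab
      · simpa [hp, hq, hbv] using Relation.ReflTransGen.single (adj_symm hab)
    · have hp : p ≠ v := by rintro rfl; exact hA _ hmem (Sym2.mem_mk_left _ _)
      have hq : q ≠ v := by rintro rfl; exact hA _ hmem (Sym2.mem_mk_right _ _)
      simpa [hp, hq] using (Relation.ReflTransGen.single (Multiset.mem_cons_of_mem hmem) :
        Reach (s(a, b) ::ₘ A) p q)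
lemma IsCycle.suppress (hav : a ≠ v) (hbv : b ≠ v) (hA : ∀ e ∈ A, v ∉ e)
    (h : IsCycle (s(v, a) ::ₘ s(v, b) ::ₘ A)) : IsCycle (s(a, b) ::ₘ A) := by
  have hv := notMem_support_cons hav hbv hA
  have hsub : support (s(a, b) ::ₘ A) ⊆ support (s(v, a) ::ₘ s(v, b) ::ₘ A) :=
    support_cons_cons ▸ Set.subset_insert _ _
  refine ⟨Multiset.cons_ne_zero, ⟨⟨a, _, Multiset.mem_cons_self _ _, Sym2.mem_mk_left _ _⟩,
    fun x hx y hy => ?_⟩, fun u hu => ?_⟩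
  · have hxv : x ≠ v := ne_of_mem_of_not_mem hx hv
    have hyv : y ≠ v := ne_of_mem_of_not_mem hy hv
    simpa [hxv, hyv] using
      reach_cons_of_reach_cons_cons hav hbv hA (h.2.1.2 x (hsub hx) y (hsub hy))
  · rw [← deg_cons_cons_of_ne hav hbv (ne_of_mem_of_not_mem hu hv)]
    exact h.2.2 u (hsub hu)

lemma IsCycle.subdivide (hav : a ≠ v) (hbv : b ≠ v) (hA : ∀ e ∈ A, v ∉ e)
    (h : IsCycle (s(a, b) ::ₘ A)) : IsCycle (s(v, a) ::ₘ s(v, b) ::ₘ A) := by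
  have ha : a ∈ support (s(a, b) ::ₘ A) :=
    ⟨_, Multiset.mem_cons_self _ _, Sym2.mem_mk_left _ _⟩
  have hreach : ∀ z ∈ support (s(v, a) ::ₘ s(v, b) ::ₘ A),
      Reach (s(v, a) ::ₘ s(v, b) ::ₘ A) z a := by
    intro z hz
    rw [support_cons_cons] at hz
    rcases hz with rfl | hz
    · exact .single (Multiset.mem_cons_self _ _)
    · exact reach_cons_cons_of_reach_cons (h.2.1.2 z hz a ha)
  refine ⟨Multiset.cons_ne_zero, ⟨⟨v, _, Multiset.mem_cons_self _ _, Sym2.mem_mk_left _ _⟩,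
    fun x hx y hy => (hreach x hx).trans (reach_symm (hreach y hy))⟩, fun u hu => ?_⟩
  rcases eq_or_ne u v with rfl | huv
  · exact deg_cons_cons_self hav hbv hA
  · rw [deg_cons_cons_of_ne hav hbv huv]
    rw [support_cons_cons] at hu
    exact h.2.2 u (hu.resolve_left huv)

lemma exists_eq_cons_cons_of_deg_eq_two {G : Multiset (Sym2 V)} (hloop : s(v, v) ∉ G)
    (h : deg G v = 2) :
    ∃ a b A, a ≠ v ∧ b ≠ v ∧ (∀ e ∈ A, v ∉ e) ∧
      G = s(v, a) ::ₘ s(v, b) ::ₘ A := by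
  rw [deg_eq_card_filter hloop] at h
  obtain ⟨e₁, e₂, he⟩ := Multiset.card_eq_two.mp h
  have hmem : ∀ e ∈ G.filter (v ∈ ·), ∃ a, a ≠ v ∧ e = s(v, a) := by
    intro e he
    obtain ⟨heG, hve⟩ := Multiset.mem_filter.mp he
    obtain ⟨a, rfl⟩ := Sym2.mem_iff_exists.mp hve
    exact ⟨a, by rintro rfl; exact hloop heG, rfl⟩
  obtain ⟨a, hav, rfl⟩ := hmem e₁ (by simp [he])
  obtain ⟨b, hbv, rfl⟩ := hmem e₂ (by simp [he])
  refine ⟨a, b, G.filter (v ∉ ·), hav, hbv, fun e he => (Multiset.mem_filter.mp he).2, ?_⟩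
  calc G = G.filter (v ∈ ·) + G.filter (v ∉ ·) := (Multiset.filter_add_not _ G).symm
    _ = _ := by rw [he, Multiset.insert_eq_cons, Multiset.cons_add, Multiset.singleton_add]

lemma exists_eq_cons_cons_of_le {C : Multiset (Sym2 V)} (hav : a ≠ v) (hbv : b ≠ v)
    (hA : ∀ e ∈ A, v ∉ e) (hC : C ≤ s(v, a) ::ₘ s(v, b) ::ₘ A) (hdeg : deg C v = 2) :
    ∃ C₀ ≤ A, C = s(v, a) ::ₘ s(v, b) ::ₘ C₀ := by
  have hAv : A.filter (v ∈ ·) = 0 := Multiset.filter_eq_nil.mpr hA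
  have hA' : A.filter (v ∉ ·) = A := Multiset.filter_eq_self.mpr hA
  have hloop : s(v, v) ∉ C := fun h => by
    have := Multiset.mem_of_le hC h
    simp [hav.symm, hbv.symm] at this
    exact hA _ this (Sym2.mem_mk_left _ _)
  have hle : C.filter (v ∈ ·) ≤ {s(v, a), s(v, b)} := by
    simpa [Multiset.filter_cons, hAv] using Multiset.filter_le_filter (v ∈ ·) hC
  have hEv : C.filter (v ∈ ·) = {s(v, a), s(v, b)} :=
    Multiset.eq_of_le_of_card_le hle (by simp [← deg_eq_card_filter hloop, hdeg])
  refine ⟨C.filter (v ∉ ·), ?_, ?_⟩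
  · simpa [Multiset.filter_cons, hA'] using Multiset.filter_le_filter (v ∉ ·) hC
  · calc C = C.filter (v ∈ ·) + C.filter (v ∉ ·) := (Multiset.filter_add_not _ C).symm
      _ = _ := by rw [hEv, Multiset.insert_eq_cons, Multiset.cons_add, Multiset.singleton_add]

lemma fvs_le_fvs_suppress (hav : a ≠ v) (hbv : b ≠ v) (hA : ∀ e ∈ A, v ∉ e) :
    fvs (s(v, a) ::ₘ s(v, b) ::ₘ A) ≤ fvs (s(a, b) ::ₘ A) := by
  refine fvs_le_fvs_of_reroute fun S C hC hcyc => ?_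
  obtain ⟨hCG, hCS⟩ := le_deleteVerts_iff.mp hC
  by_cases hvC : v ∈ support C
  · obtain ⟨C₀, hC₀, rfl⟩ := exists_eq_cons_cons_of_le hav hbv hA hCG (hcyc.2.2 v hvC)
    refine ⟨s(a, b) ::ₘ C₀, le_deleteVerts_iff.mpr ⟨Multiset.cons_le_cons _ hC₀, ?_⟩,
      hcyc.suppress hav hbv fun e he => hA e (Multiset.mem_of_le hC₀ he)⟩
    exact hCS.mono_left (support_cons_cons ▸ Set.subset_insert _ _)
  · have hnot : ∀ x, s(v, x) ∉ C := fun x hx => hvC ⟨_, hx, Sym2.mem_mk_left _ _⟩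
    have hCA : C ≤ A :=
      (Multiset.le_cons_of_notMem (hnot b)).mp ((Multiset.le_cons_of_notMem (hnot a)).mp hCG)
    exact ⟨C, le_deleteVerts_iff.mpr ⟨hCA.trans (Multiset.le_cons_self _ _), hCS⟩, hcyc⟩
noncomputable def subdivide (v a b : V) (C : Multiset (Sym2 V)) : Multiset (Sym2 V) :=
  if s(a, b) ∈ C then s(v, a) ::ₘ s(v, b) ::ₘ C.erase s(a, b) else C

lemma mem_support_subdivide {C : Multiset (Sym2 V)} {x : V}
    (hx : x ∈ support (subdivide v a b C)) :
    x ∈ support C ∨ x = v ∧ s(a, b) ∈ C := by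
  unfold subdivide at hx
  split_ifs at hx with hab
  · rw [support_cons_cons, Set.mem_insert_iff, support_cons] at hx
    rcases hx with rfl | hx | ⟨e, he, hxe⟩
    · exact .inr ⟨rfl, hab⟩
    · exact .inl ⟨_, hab, hx⟩
    · exact .inl ⟨e, Multiset.mem_of_le (Multiset.erase_le _ _) he, hxe⟩
  · exact .inl hx

lemma cp_suppress_le (hav : a ≠ v) (hbv : b ≠ v) (hA : ∀ e ∈ A, v ∉ e) :
    cp (s(a, b) ::ₘ A) ≤ cp (s(v, a) ::ₘ s(v, b) ::ₘ A) := by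
  have hv := notMem_support_cons hav hbv hA
  refine cp_le_cp_of_map (subdivide v a b) (fun C hC hcyc => ?_)
    (fun C hC D hD _ _ hCD => Set.disjoint_left.mpr fun x hxC hxD => ?_)
  · unfold subdivide
    split_ifs with hab
    · obtain ⟨C₀, rfl⟩ := Multiset.exists_cons_of_mem hab
      have hC₀ : C₀ ≤ A := (Multiset.cons_le_cons_iff _).mp hC
      rw [Multiset.erase_cons_head]
      exact ⟨Multiset.cons_le_cons _ (Multiset.cons_le_cons _ hC₀),
        hcyc.subdivide hav hbv fun e he => hA e (Multiset.mem_of_le hC₀ he)⟩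
    · refine ⟨((Multiset.le_cons_of_notMem hab).mp hC).trans ?_, hcyc⟩
      exact (Multiset.le_cons_self _ _).trans (Multiset.le_cons_self _ _)
  have hvC : v ∉ support C := fun h => hv (support_mono hC h)
  rcases mem_support_subdivide hxC with hxC | ⟨rfl, habC⟩ <;>
    rcases mem_support_subdivide hxD with hxD | ⟨hxv, habD⟩
  · exact Set.disjoint_left.mp hCD hxC hxD
  · exact hvC (hxv ▸ hxC)
  · exact hv (support_mono hD hxD)
  · exact Set.disjoint_left.mp hCD ⟨_, habC, Sym2.mem_mk_left _ _⟩
      ⟨_, habD, Sym2.mem_mk_left _ _⟩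

/-- Branch sets avoid `v`, which is isolated in `ab :: A`; adding `v` to the branch set
containing `a` turns the edge `ab` into the path `a v b`. -/
lemma HasMinor.of_suppress {W : Type*} {K : SimpleGraph W} (hK : ∀ w, ∃ w', K.Adj w w')
    (hav : a ≠ v) (hbv : b ≠ v) (hA : ∀ e ∈ A, v ∉ e)
    (hm : HasMinor (s(a, b) ::ₘ A) K) :
    HasMinor (s(v, a) ::ₘ s(v, b) ::ₘ A) K := by
  obtain ⟨B, hne, hdisj, hconn, hadj⟩ := hm
  set G := s(v, a) ::ₘ s(v, b) ::ₘ A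
  have hvH := notMem_support_iff.mp (notMem_support_cons hav hbv hA)
  have hva : Adj G v a := Multiset.mem_cons_self _ _
  have hvb : Adj G v b := Multiset.mem_cons_of_mem (Multiset.mem_cons_self _ _)
  have hvB : ∀ w, v ∉ B w := by
    intro w hvw
    obtain ⟨w', hww'⟩ := hK w
    obtain ⟨x, hx, y, -, hxy⟩ := hadj w w' hww'
    have hxv : x = v := by
      rcases Relation.ReflTransGen.cases_tail (hconn w x hx v hvw) with h | ⟨c, -, hc, -, -⟩
      · exact h.symm
      · exact absurd (Sym2.mem_mk_right c v) (hvH _ hc)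
    exact hvH _ hxy (hxv ▸ Sym2.mem_mk_left x y)
  set B' : W → Set V := fun w => B w ∪ {x | x = v ∧ a ∈ B w}
  have hBB' : ∀ w, B w ⊆ B' w := fun w => Set.subset_union_left
  have hstep : ∀ w p q, Adj (s(a, b) ::ₘ A) p q → p ∈ B w → q ∈ B w →
      Relation.ReflTransGen (fun x y => Adj G x y ∧ x ∈ B' w ∧ y ∈ B' w) p q := by
    intro w p q hpq hp hq
    rcases Multiset.mem_cons.mp hpq with heq | hmem
    · rcases Sym2.eq_iff.mp heq with ⟨rfl, rfl⟩ | ⟨rfl, rfl⟩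
      · exact .head ⟨adj_symm hva, hBB' w hp, .inr ⟨rfl, hp⟩⟩
          (.single ⟨hvb, .inr ⟨rfl, hp⟩, hBB' w hq⟩)
      · exact .head ⟨adj_symm hvb, hBB' w hp, .inr ⟨rfl, hq⟩⟩
          (.single ⟨hva, .inr ⟨rfl, hq⟩, hBB' w hq⟩)
    · exact .single
        ⟨Multiset.mem_cons_of_mem (Multiset.mem_cons_of_mem hmem), hBB' w hp, hBB' w hq⟩
  have hconn' : ∀ w, ∀ x ∈ B w, ∀ y ∈ B w,
      Relation.ReflTransGen (fun x y => Adj G x y ∧ x ∈ B' w ∧ y ∈ B' w) x y := by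
    intro w x hx y hy
    induction hconn w x hx y hy with
    | refl => exact .refl
    | tail _ h ih => exact (ih h.2.1).trans (hstep w _ _ h.1 h.2.1 h.2.2)
  refine ⟨B', fun w => (hne w).mono (hBB' w), fun w w' hww' => ?_, ?_, fun w w' hww' => ?_⟩
  · rw [Set.disjoint_left]
    rintro z (hz | ⟨rfl, haw⟩) (hz' | ⟨hzv, haw'⟩)
    · exact Set.disjoint_left.mp (hdisj w w' hww') hz hz'
    · exact hvB w (hzv ▸ hz)
    · exact hvB w' hz'
    · exact Set.disjoint_left.mp (hdisj w w' hww') haw haw'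
  · rintro w x (hx | ⟨rfl, haw⟩) y (hy | ⟨rfl, haw'⟩)
    · exact hconn' w x hx y hy
    · exact (hconn' w x hx a haw').tail ⟨adj_symm hva, hBB' w haw', .inr ⟨rfl, haw'⟩⟩
    · exact .head ⟨hva, .inr ⟨rfl, haw⟩, hBB' w haw⟩ (hconn' w a haw y hy)
    · exact .refl
  · obtain ⟨x, hx, y, hy, hxy⟩ := hadj w w' hww'
    rcases Multiset.mem_cons.mp hxy with heq | hmem
    · rcases Sym2.eq_iff.mp heq with ⟨rfl, rfl⟩ | ⟨rfl, rfl⟩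
      · exact ⟨v, .inr ⟨rfl, hx⟩, y, hBB' w' hy, hvb⟩
      · exact ⟨x, hBB' w hx, v, .inr ⟨rfl, hy⟩, adj_symm hvb⟩
    · exact ⟨x, hBB' w hx, y, hBB' w' hy,
        Multiset.mem_cons_of_mem (Multiset.mem_cons_of_mem hmem)⟩

lemma Planar.suppress (hav : a ≠ v) (hbv : b ≠ v) (hA : ∀ e ∈ A, v ∉ e)
    (h : Planar (s(v, a) ::ₘ s(v, b) ::ₘ A)) : Planar (s(a, b) ::ₘ A) := by
  refine ⟨fun hm => h.1 (hm.of_suppress ?_ hav hbv hA),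
    fun hm => h.2 (hm.of_suppress ?_ hav hbv hA)⟩
  · exact fun w => (exists_ne w).imp fun _ hw => hw.symm
  · rintro (i | i)
    exacts [⟨.inr 0, by simp⟩, ⟨.inl 0, by simp⟩]

end Suppression

end MG

open MG

/-- A minimum-vertex counterexample to `fvs ≤ 2 * cp` among subcubic planar
multigraphs is 3-regular. -/
theorem min_counterexample_cubic {V : Type*} (G : Multiset (Sym2 V))
    (hsub : MG.Subcubic G) (hplanar : MG.Planar G)
    (hcex : 2 * MG.cp G < MG.fvs G)
    (hmin : ∀ H : Multiset (Sym2 V), MG.Subcubic H → MG.Planar H →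
      (MG.support H).ncard < (MG.support G).ncard → MG.fvs H ≤ 2 * MG.cp H) :
    ∀ v ∈ MG.support G, MG.deg G v = 3 := by
  have hsmaller : ∀ H, Subcubic H → Planar H → support H ⊂ support G →
      fvs H ≤ 2 * cp H :=
    fun H hH hH' hlt => hmin H hH hH' (Set.ncard_lt_ncard hlt (support_finite G))
  have hdelete : ∀ u ∈ support G, fvs (deleteVerts G {u}) ≤ 2 * cp (deleteVerts G {u}) :=
    fun u hu => hsmaller _ (hsub.mono (deleteVerts_le G _)) (hplanar.mono (deleteVerts_le G _))
      (support_deleteVerts_ssubset hu rfl)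
  have hloopless : ∀ u, s(u, u) ∉ G := by
    intro u hu
    have hfvs := fvs_le_fvs_deleteVerts_add_card G {u}
    rw [Finset.coe_singleton, Finset.card_singleton] at hfvs
    have hcp := cp_deleteVerts_add_one_le (S := {u}) (Multiset.singleton_le.mpr hu)
      (isCycle_loop u) (by simp [support])
    have hH := hdelete u ⟨_, hu, Sym2.mem_mk_left u u⟩
    omega
  intro v hv
  obtain hdeg | hdeg | hdeg : deg G v = 1 ∨ deg G v = 2 ∨ deg G v = 3 := by
    have := deg_pos_of_mem_support hv
    have := hsub v
    omega
  · have hfvs := fvs_le_fvs_deleteVerts_of_deg_le_one hdeg.le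
    have hcp := cp_mono (deleteVerts_le G {v})
    have hH := hdelete v hv
    omega
  · obtain ⟨a, b, A, hav, hbv, hA, rfl⟩ := exists_eq_cons_cons_of_deg_eq_two (hloopless v) hdeg
    have hfvs := fvs_le_fvs_suppress hav hbv hA
    have hcp := cp_suppress_le hav hbv hA
    have hH := hsmaller _ (hsub.suppress hav hbv) (hplanar.suppress hav hbv hA)
      (support_cons_ssubset_support_cons_cons hav hbv hA)
    omega
  · exact hdeg
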